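/- arXiv:0711.3023 — 5 statements merged into one kernel-verified Lean document; each statement's English description precedes it below -/
import Mathlib

section
/- Let k be a perfect field, let A be a scheme finite over Spec k, and let X be a connected reduced scheme over k that admits a k-point (i.e., the structure morphism X → Spec k admits a section). Then every morphism φ: X → A of k-schemes is constant. -/
/-!
As `A` is finite over `k` it is affine, so `φ` is determined by the ring map `Γ(A) → Γ(X)`,
and it suffices that every `r` in its image equals `ι (ε r)`, where `ι : k → Γ(X)` is the
structure map and `ε : Γ(X) → k` is evaluation at the `k`-point. Such an `r` is integral over
`k`, so `s = r - ι (ε r)` lives in the finite, hence Artinian, algebra `k[s]`. There Fitting's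
lemma produces an idempotent that is `0` or `1` because `X` is connected, so `s` is a unit or
nilpotent. It is not a unit since `ε s = 0`, and a nilpotent section of the reduced `X` vanishes.
-/

open CategoryTheory CategoryTheory.Limits AlgebraicGeometry

def IsConstantOver {S : Scheme} {X Y : Over S} (φ : X ⟶ Y) : Prop :=
  ∀ (T : Over S) (f g : T ⟶ X), f ≫ φ = g ≫ φ

namespace IsArtinianRing

variable {R : Type*} [CommRing R] [IsArtinianRing R]

theorem isUnit_or_isNilpotent (h : ∀ e : R, IsIdempotentElem e → e = 0 ∨ e = 1) (x : R) :
    IsUnit x ∨ IsNilpotent x := by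
  obtain ⟨n, y, hy⟩ := IsArtinian.exists_pow_succ_smul_dvd x (1 : R)
  have hfix : x ^ (n + 1) * (x * y) = x ^ (n + 1) := by
    rw [smul_eq_mul, smul_eq_mul, mul_one] at hy
    calc x ^ (n + 1) * (x * y) = x * (x ^ (n + 1) * y) := by ring
      _ = x ^ (n + 1) := by rw [hy, pow_succ']
  have hfix_pow (j : ℕ) : x ^ (n + 1) * (x * y) ^ j = x ^ (n + 1) := by
    induction j with
    | zero => rw [pow_zero, mul_one]
    | succ j ih => rw [pow_succ (x * y), ← mul_assoc, ih, hfix]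
  have he : IsIdempotentElem ((x * y) ^ (n + 1)) := by
    calc (x * y) ^ (n + 1) * (x * y) ^ (n + 1)
        = y ^ (n + 1) * (x ^ (n + 1) * (x * y) ^ (n + 1)) := by ring
      _ = (x * y) ^ (n + 1) := by rw [hfix_pow, mul_pow, mul_comm]
  rcases h _ he with h0 | h1
  · exact .inr ⟨n + 1, by rw [← hfix_pow (n + 1), h0, mul_zero]⟩
  · exact .inl (isUnit_of_mul_isUnit_left (isUnit_pow_succ_iff.mp (h1 ▸ isUnit_one)))

theorem isUnit_or_isNilpotent_of_isIntegral {A : Type*} [CommRing A] [Algebra R A]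
    (h : ∀ e : A, IsIdempotentElem e → e = 0 ∨ e = 1) {a : A} (ha : IsIntegral R a) :
    IsUnit a ∨ IsNilpotent a := by
  let B := Algebra.adjoin R {a}
  have : Module.Finite R B := Algebra.finite_adjoin_simple_of_isIntegral ha
  have : IsArtinianRing B := isArtinian_of_tower R inferInstance
  have hB (e : B) (he : IsIdempotentElem e) : e = 0 ∨ e = 1 :=
    (h e (he.map B.val)).imp Subtype.ext Subtype.ext
  rcases isUnit_or_isNilpotent hB ⟨a, Algebra.self_mem_adjoin_singleton R a⟩ with hu | hn
  · exact .inl (hu.map B.val)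
  · exact .inr (hn.map B.val)

end IsArtinianRing

theorem RingHom.apply_eq_of_isIntegralElem_of_leftInverse {K R : Type*} [CommRing K]
    [IsArtinianRing K] [CommRing R] [IsReduced R]
    (h : ∀ e : R, IsIdempotentElem e → e = 0 ∨ e = 1) (ι : K →+* R) (ε : R →+* K)
    (hε : Function.LeftInverse ε ι) {r : R} (hr : ι.IsIntegralElem r) : ι (ε r) = r := by
  let := ι.toAlgebra
  have hs : _root_.IsIntegral K (r - ι (ε r)) := IsIntegral.sub hr isIntegral_algebraMap
  have hεs : ε (r - ι (ε r)) = 0 := by rw [map_sub, hε, sub_self]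
  rcases IsArtinianRing.isUnit_or_isNilpotent_of_isIntegral h hs with hu | hn
  · -- `ε` maps the unit `r - ι (ε r)` to `0`, so `K` and hence `R` are zero rings
    have : Subsingleton R :=
      subsingleton_of_zero_eq_one <| by
        simpa using congrArg ι (isUnit_zero_iff.mp (hεs ▸ hu.map ε))
    exact Subsingleton.elim _ _
  · exact (sub_eq_zero.mp hn.eq_zero).symm

namespace AlgebraicGeometry

theorem Scheme.eq_zero_or_one_of_isIdempotentElem (X : Scheme) [PreconnectedSpace X]
    {e : Γ(X, ⊤)} (he : IsIdempotentElem e) : e = 0 ∨ e = 1 := by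
  have hcover : (Set.univ : Set X) ⊆ X.basicOpen e ∪ X.basicOpen (1 - e) := by
    intro x _
    have := X.basicOpen_add_le e (1 - e)
    rw [add_sub_cancel, Scheme.basicOpen_one] at this
    exact this trivial
  have hdisj : Disjoint (X.basicOpen e : Set X) (X.basicOpen (1 - e)) := by
    rw [Set.disjoint_iff_inter_eq_empty, ← TopologicalSpace.Opens.coe_inf,
      ← Scheme.basicOpen_mul, he.mul_one_sub_self, Scheme.basicOpen_zero,
      TopologicalSpace.Opens.coe_bot]
  have eq_one_of_top {f : Γ(X, ⊤)} (hf : IsIdempotentElem f)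
      (htop : Set.univ ⊆ (X.basicOpen f : Set X)) : f = 1 :=
    (IsIdempotentElem.iff_eq_one_of_isUnit (X.toRingedSpace.isUnit_of_isUnit_germ ⊤ f
      fun x _ ↦ (X.mem_basicOpen_top f x).mp (htop trivial))).mp hf
  rcases isPreconnected_univ.subset_or_subset (X.basicOpen e).isOpen (X.basicOpen (1 - e)).isOpen
    hdisj hcover with h | h
  · exact .inr (eq_one_of_top he h)
  · exact .inl (sub_eq_self.mp (eq_one_of_top he.one_sub h))

end AlgebraicGeometry

theorem isConstantOver_of_left_eq_hom_comp {S : Scheme} {X Y : Over S} (φ : X ⟶ Y)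
    (g : S ⟶ Y.left) (h : φ.left = X.hom ≫ g) : IsConstantOver φ := by
  intro T f f'
  ext1
  rw [Over.comp_left, Over.comp_left, h, ← Category.assoc, ← Category.assoc, Over.w f,
    Over.w f']

theorem constant_of_connected_reduced_to_finite_general (k : Type) [Field k]
    (A X : Over (Spec (CommRingCat.of k)))
    [IsFinite A.hom] [ConnectedSpace X.left] [IsReduced X.left]
    (σ : Spec (CommRingCat.of k) ⟶ X.left) (hσ : σ ≫ X.hom = 𝟙 _)
    (φ : X ⟶ A) : IsConstantOver φ := by
  have : IsAffine A.left := isAffine_of_isAffineHom A.hom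
  refine isConstantOver_of_left_eq_hom_comp φ (σ ≫ φ.left) (ext_of_isAffine ?_)
  have hφ : A.hom.appTop ≫ φ.left.appTop = X.hom.appTop := by
    rw [← Scheme.Hom.comp_appTop, Over.w φ]
  have hσ' : Function.LeftInverse σ.appTop X.hom.appTop := fun c ↦ by
    rw [← CommRingCat.comp_apply, ← Scheme.Hom.comp_appTop, hσ, Scheme.Hom.id_appTop]; rfl
  rw [Scheme.Hom.comp_appTop, Scheme.Hom.comp_appTop]
  ext b
  have hb : X.hom.appTop.hom.IsIntegralElem (φ.left.appTop b) := by
    rw [← hφ]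
    exact ((IsFinite.finite_app A.hom ⊤ (isAffineOpen_top _)).to_isIntegral b).map _
  exact (RingHom.apply_eq_of_isIntegralElem_of_leftInverse
    (fun _ ↦ X.left.eq_zero_or_one_of_isIdempotentElem) _ _ hσ' hb).symm

theorem constant_of_connected_reduced_to_finite (k : Type) [Field k] [PerfectField k]
    (A X : Over (Spec (CommRingCat.of k)))
    [IsFinite A.hom] [ConnectedSpace X.left] [IsReduced X.left]
    (σ : Spec (CommRingCat.of k) ⟶ X.left) (hσ : σ ≫ X.hom = 𝟙 _)
    (φ : X ⟶ A) : IsConstantOver φ :=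
  constant_of_connected_reduced_to_finite_general k A X σ hσ φ
end

section
/- Let k be a field of characteristic p > 0 and let c: ℕ → k be a finitely supported function such that c_i = 0 whenever p divides i. Set t(x,y) = Σ_i c_i · ((x+y)^i − x^i − y^i) in the polynomial ring k[x,y]. Then there exists a polynomial u ∈ k[x,y] with t = u^p − u if and only if c_i = 0 for all i ≠ 1. -/
open MvPolynomial

lemma totalDegree_pow_char_aux {k : Type*} [Field k] {p : ℕ} (hp : p.Prime) [CharP k p]
    (u : MvPolynomial (Fin 2) k) : (u ^ p).totalDegree = p * u.totalDegree := by
  haveI := Fact.mk hp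
  classical
  rcases eq_or_ne u 0 with rfl | hu
  · simp [zero_pow hp.ne_zero]
  refine le_antisymm (totalDegree_pow u p) ?_
  obtain ⟨b, hb, hb2⟩ := u.support.exists_mem_eq_sup (support_nonempty.mpr hu)
      (fun s => s.sum fun _ e => e)
  have key : coeff (p • b) (u ^ p) = (coeff b u) ^ p := by
    conv_lhs => rw [← support_sum_monomial_coeff u]
    rw [sum_pow_char, coeff_sum, Finset.sum_eq_single b]
    · rw [monomial_pow, coeff_monomial, if_pos rfl]
    · intro m _ hmb
      rw [monomial_pow, coeff_monomial, if_neg]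
      intro hcontra
      apply hmb
      ext x
      have := DFunLike.congr_fun hcontra x
      simp only [Finsupp.smul_apply, smul_eq_mul] at this
      exact Nat.eq_of_mul_eq_mul_left hp.pos this
    · intro h; exact absurd hb h
  have hne : coeff (p • b) (u ^ p) ≠ 0 := by
    rw [key]; exact pow_ne_zero _ (mem_support_iff.mp hb)
  have hle := le_totalDegree (mem_support_iff.mpr hne)
  have hsum : ((p • b).sum fun _ e => e) = p * (b.sum fun _ e => e) := by
    rw [Finsupp.sum_smul_index (fun _ => rfl), Finsupp.mul_sum]
  rw [hsum, ← hb2] at hle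
  exact hle

theorem artinSchreier_criterion {k : Type*} [Field k] {p : ℕ} (hp : p.Prime) [CharP k p]
    (c : ℕ →₀ k) (hc : ∀ i, p ∣ i → c i = 0) :
    (∃ u : MvPolynomial (Fin 2) k,
        (c.sum fun i ci => C ci * ((X 0 + X 1) ^ i - X 0 ^ i - X 1 ^ i))
          = u ^ p - u) ↔
      ∀ i, i ≠ 1 → c i = 0 := by
  classical
  constructor
  · rintro ⟨u, hu⟩ i hi1
    by_cases hpi : p ∣ i
    · exact hc i hpi
    by_contra hci
    have hi2 : 2 ≤ i := by
      rcases i with _ | _ | i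
      · exact absurd (dvd_zero p) hpi
      · exact absurd rfl hi1
      · omega
    set t : MvPolynomial (Fin 2) k := (c.sum fun i ci => C ci * ((X 0 + X 1) ^ i - X 0 ^ i - X 1 ^ i))
      with ht
    set S := c.support.filter (fun j => 2 ≤ j) with hS
    have hSne : S.Nonempty :=
      ⟨i, by simp [hS, Finsupp.mem_support_iff, hci, hi2]⟩
    set n := S.max' hSne with hn
    have hnS : n ∈ S := S.max'_mem hSne
    have hn2 : 2 ≤ n := (Finset.mem_filter.mp hnS).2
    have hcn : c n ≠ 0 := Finsupp.mem_support_iff.mp (Finset.mem_filter.mp hnS).1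
    have hpn : ¬ p ∣ n := fun h => hcn (hc n h)
    have hjn : ∀ j ∈ c.support, j ≤ n := by
      intro j hj
      by_cases h2 : 2 ≤ j
      · exact S.le_max' j (Finset.mem_filter.mpr ⟨hj, h2⟩)
      · omega
    set m : Fin 2 →₀ ℕ := Finsupp.single 0 (n - 1) + Finsupp.single 1 1 with hm
    have hm0 : m 0 = n - 1 := by
      simp [hm, Finsupp.single_apply]
    have hm1 : m 1 = 1 := by
      simp [hm, Finsupp.single_apply]
    have hmsum : (m.sum fun _ e => e) = n := by
      rw [hm, Finsupp.sum_add_index (fun _ _ => rfl) (fun _ _ _ _ => rfl)]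
      rw [Finsupp.sum_single_index rfl, Finsupp.sum_single_index rfl]
      omega
    have hX0m : ∀ j, coeff m ((X 0 : MvPolynomial (Fin 2) k) ^ j) = 0 := by
      intro j
      rw [X_pow_eq_monomial, coeff_monomial, if_neg]
      intro h
      have := DFunLike.congr_fun h 1
      rw [hm1, Finsupp.single_apply, if_neg (by decide)] at this
      exact one_ne_zero this.symm
    have hX1m : ∀ j, coeff m ((X 1 : MvPolynomial (Fin 2) k) ^ j) = 0 := by
      intro j
      rw [X_pow_eq_monomial, coeff_monomial, if_neg]
      intro h
      have := DFunLike.congr_fun h 0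
      rw [hm0, Finsupp.single_apply, if_neg (by decide)] at this
      omega
    have haddlt : ∀ j, j < n → coeff m ((X 0 + X 1 : MvPolynomial (Fin 2) k) ^ j) = 0 := by
      intro j hjlt
      apply coeff_eq_zero_of_totalDegree_lt
      have hms2 : (∑ i ∈ m.support, m i) = n := hmsum
      rw [hms2]
      refine lt_of_le_of_lt ?_ hjlt
      refine (totalDegree_pow _ _).trans ?_
      have h1 : (X 0 + X 1 : MvPolynomial (Fin 2) k).totalDegree ≤ 1 := by
        refine (totalDegree_add _ _).trans ?_
        simp [totalDegree_X]
      calc j * (X 0 + X 1 : MvPolynomial (Fin 2) k).totalDegree ≤ j * 1 :=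
            Nat.mul_le_mul_left j h1
        _ = j := mul_one j
    have haddn : coeff m ((X 0 + X 1 : MvPolynomial (Fin 2) k) ^ n) = (n : k) := by
      rw [add_pow, coeff_sum, Finset.sum_eq_single (n - 1)]
      · have hkey : (X 0 : MvPolynomial (Fin 2) k) ^ (n - 1) * X 1 ^ (n - (n - 1)) *
            (n.choose (n - 1) : MvPolynomial (Fin 2) k)
            = monomial m ((n.choose (n - 1) : k) * 1) := by
          rw [show n - (n - 1) = 1 by omega, X_pow_eq_monomial, X_pow_eq_monomial,
            monomial_mul, one_mul, ← map_natCast (C : k →+* MvPolynomial (Fin 2) k),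
            mul_comm, C_mul_monomial, ← hm]
        rw [hkey, coeff_monomial, if_pos rfl, mul_one,
          Nat.choose_symm (by omega : 1 ≤ n), Nat.choose_one_right]
      · intro j _ hjne
        rw [X_pow_eq_monomial, X_pow_eq_monomial, monomial_mul, one_mul,
          ← map_natCast (C : k →+* MvPolynomial (Fin 2) k),
          mul_comm, C_mul_monomial, coeff_monomial, if_neg]
        intro h
        have := DFunLike.congr_fun h 0
        rw [hm0] at this
        simp [Finsupp.single_apply] at this
        omega
      · intro h
        exact absurd (Finset.mem_range.mpr (by omega)) h
    have hcoefft : coeff m t = c n * (n : k) := by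
      rw [ht, Finsupp.sum, coeff_sum, Finset.sum_eq_single n]
      · rw [coeff_C_mul, coeff_sub, coeff_sub, haddn, hX0m, hX1m, sub_zero, sub_zero]
      · intro j hj hjne
        rw [coeff_C_mul, coeff_sub, coeff_sub, hX0m, hX1m, sub_zero, sub_zero,
          haddlt j (lt_of_le_of_ne (hjn j hj) hjne), mul_zero]
      · intro h
        exact absurd (Finset.mem_filter.mp hnS).1 h
    have hcm : coeff m t ≠ 0 := by
      rw [hcoefft]
      refine mul_ne_zero hcn ?_
      rwa [Ne, CharP.cast_eq_zero_iff k p]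
    have hlow : n ≤ t.totalDegree := by
      have := le_totalDegree (p := t) (mem_support_iff.mpr hcm)
      rwa [hmsum] at this
    have hupp : t.totalDegree ≤ n := by
      rw [ht, Finsupp.sum]
      apply totalDegree_finsetSum_le
      intro j hj
      refine (totalDegree_mul _ _).trans ?_
      rw [totalDegree_C, zero_add]
      have h1 : ((X 0 + X 1 : MvPolynomial (Fin 2) k) ^ j).totalDegree ≤ j := by
        refine (totalDegree_pow _ _).trans ?_
        have : (X 0 + X 1 : MvPolynomial (Fin 2) k).totalDegree ≤ 1 := by
          refine (totalDegree_add _ _).trans ?_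
          simp [totalDegree_X]
        calc j * (X 0 + X 1 : MvPolynomial (Fin 2) k).totalDegree ≤ j * 1 :=
              Nat.mul_le_mul_left j this
          _ = j := mul_one j
      have h2 : ((X 0 : MvPolynomial (Fin 2) k) ^ j).totalDegree ≤ j := by
        simp [totalDegree_X_pow]
      have h3 : ((X 1 : MvPolynomial (Fin 2) k) ^ j).totalDegree ≤ j := by
        simp [totalDegree_X_pow]
      refine le_trans ((totalDegree_sub _ _).trans ?_) (hjn j hj)
      refine max_le ((totalDegree_sub _ _).trans (max_le h1 h2)) h3
    have htd : t.totalDegree = n := le_antisymm hupp hlow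
    -- now derive contradiction via u
    have hdu : 1 ≤ u.totalDegree := by
      by_contra h
      push_neg at h
      have hud : u.totalDegree = 0 := by omega
      have hb : (u ^ p - u).totalDegree ≤ 0 := by
        refine (totalDegree_sub _ _).trans (max_le ?_ hud.le)
        refine (totalDegree_pow _ _).trans ?_
        rw [hud, mul_zero]
      rw [← hu, htd] at hb
      omega
    have hfin : t.totalDegree = p * u.totalDegree := by
      rw [hu, sub_eq_add_neg, totalDegree_add_eq_left_of_totalDegree_lt,
        totalDegree_pow_char_aux hp]
      rw [totalDegree_neg, totalDegree_pow_char_aux hp]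
      have := hp.two_le
      nlinarith
    rw [htd] at hfin
    exact hpn ⟨u.totalDegree, hfin⟩
  · intro h
    refine ⟨0, ?_⟩
    rw [zero_pow hp.ne_zero, sub_zero]
    rw [Finsupp.sum]
    apply Finset.sum_eq_zero
    intro j hj
    rcases eq_or_ne j 1 with rfl | hj1
    · rw [pow_one, pow_one, pow_one]
      ring
    · rw [h j hj1, map_zero, zero_mul]
end

section
/- Let k be an algebraically closed field of characteristic p > 0. Then for every polynomial f ∈ k[x] there exist polynomials u, g ∈ k[x] such that f = (u^p − u) + g and every exponent occurring in the support of g is not divisible by p (in particular g has zero constant term). -/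
open Polynomial

private lemma AS_add {k : Type*} [Field k] {p : ℕ} (hp : p.Prime) [CharP k p]
    (u v : Polynomial k) :
    (u + v) ^ p - (u + v) = (u ^ p - u) + (v ^ p - v) := by
  haveI : Fact p.Prime := ⟨hp⟩
  rw [add_pow_char]
  ring

private lemma AS_monomial {k : Type*} [Field k] [IsAlgClosed k]
    {p : ℕ} (hp : p.Prime) [CharP k p] :
    ∀ n : ℕ, ∀ c : k, ∃ u g : Polynomial k,
      (C c) * X ^ n = (u ^ p - u) + g ∧ ∀ i ∈ g.support, ¬ p ∣ i := by
  intro n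
  induction n using Nat.strong_induction_on with
  | _ n ih =>
    intro c
    by_cases h : p ∣ n
    · rcases h with ⟨m, rfl⟩
      by_cases hm : m = 0
      · subst hm
        -- constant case: find root of X^p - X - C c
        have hdeg : (X ^ p - X - C c : Polynomial k).degree ≠ 0 := by
          have h1 : ((X : Polynomial k) + C c).degree < (X ^ p : Polynomial k).degree := by
            rw [degree_X_pow]
            calc ((X : Polynomial k) + C c).degree ≤ 1 := by
                  exact (degree_add_le _ _).trans
                    (max_le degree_X_le (degree_C_le.trans zero_le_one))
              _ < (p : WithBot ℕ) := by
                  exact_mod_cast Nat.lt_of_lt_of_le one_lt_two hp.two_le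
          have : (X ^ p - X - C c : Polynomial k).degree = (X ^ p : Polynomial k).degree := by
            rw [sub_sub]
            exact degree_sub_eq_left_of_degree_lt h1
          rw [this, degree_X_pow]
          simp [hp.ne_zero]
        obtain ⟨a, ha⟩ := IsAlgClosed.exists_root _ hdeg
        have ha' : a ^ p - a = c := by
          have := ha
          simp only [IsRoot, eval_sub, eval_pow, eval_X, eval_C] at this
          exact sub_eq_zero.mp this
        refine ⟨C a, 0, ?_, by simp⟩
        simp only [Nat.mul_zero, pow_zero, mul_one, add_zero, ← C_pow, ← C_sub, ha']
      · -- n = p * m, m ≥ 1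
        obtain ⟨a, ha⟩ := IsAlgClosed.exists_pow_nat_eq (k := k) c hp.pos
        have hmlt : m < p * m := by
          have := hp.two_le
          nlinarith [Nat.pos_of_ne_zero hm]
        obtain ⟨u', g', hg', hsupp⟩ := ih m hmlt a
        refine ⟨C a * X ^ m + u', g', ?_, hsupp⟩
        have key : (C a * X ^ m) ^ p = C c * X ^ (p * m) := by
          rw [mul_pow, ← C_pow, ha, ← pow_mul, Nat.mul_comm]
        calc C c * X ^ (p * m)
            = ((C a * X ^ m) ^ p - C a * X ^ m) + (C a * X ^ m) := by rw [key]; ring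
          _ = ((C a * X ^ m) ^ p - C a * X ^ m) + ((u' ^ p - u') + g') := by rw [hg']
          _ = ((C a * X ^ m + u') ^ p - (C a * X ^ m + u')) + g' := by
              rw [AS_add hp]; ring
    · refine ⟨0, C c * X ^ n, by simp [hp.ne_zero], ?_⟩
      intro i hi
      have : i ∈ ({n} : Finset ℕ) := by
        by_cases hc : c = 0
        · simp [hc] at hi
        · rwa [support_C_mul_X_pow n hc] at hi
      simp only [Finset.mem_singleton] at this
      rwa [this]

theorem exists_artinSchreier_representative {k : Type*} [Field k] [IsAlgClosed k]
    {p : ℕ} (hp : p.Prime) [CharP k p] (f : Polynomial k) :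
    ∃ u g : Polynomial k, f = (u ^ p - u) + g ∧ ∀ i ∈ g.support, ¬ p ∣ i := by
  induction f using Polynomial.induction_on' with
  | add q r hq hr =>
    obtain ⟨u1, g1, h1, hs1⟩ := hq
    obtain ⟨u2, g2, h2, hs2⟩ := hr
    refine ⟨u1 + u2, g1 + g2, ?_, ?_⟩
    · rw [AS_add hp, h1, h2]; ring
    · intro i hi
      rcases Finset.mem_union.mp (Polynomial.support_add hi) with h | h
      exacts [hs1 i h, hs2 i h]
  | monomial n a =>
    obtain ⟨u, g, h, hs⟩ := AS_monomial hp n a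
    rw [← C_mul_X_pow_eq_monomial]
    exact ⟨u, g, h, hs⟩
end

section
/- Let C be a monoidal category with unit object 𝟙, and let x be an object of C that is weakly invertible, i.e., there exists an object y with x ⊗ y ≅ 𝟙 and y ⊗ x ≅ 𝟙. Then the map from the automorphism group Aut(𝟙) to the automorphism group Aut(x) sending u to (λ_x)⁻¹ ≫ (u ▷ x) ≫ λ_x (that is, tensoring u on the right with the identity of x, transported along the left unitor λ_x : 𝟙 ⊗ x ≅ x) is an isomorphism of groups. -/
/-!
If `x ⊗ y ≅ 𝟙` and `y ⊗ x ≅ 𝟙`, then `- ⊗ x` is an autoequivalence of `C` with quasi-inverse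
`- ⊗ y`. Being fully faithful, it maps `Aut 𝟙` isomorphically onto `Aut (𝟙 ⊗ x)`, and conjugation
by the left unitor identifies the latter with `Aut x`.
-/

open CategoryTheory MonoidalCategory

namespace CategoryTheory.MonoidalCategory

variable {C : Type*} [Category C] [MonoidalCategory C]

def tensorRightEquivalence {x y : C} (e₁ : x ⊗ y ≅ 𝟙_ C) (e₂ : y ⊗ x ≅ 𝟙_ C) : C ≌ C :=
  Equivalence.mk (tensorRight x) (tensorRight y)
    ((rightUnitorNatIso C).symm ≪≫ (tensoringRight C).mapIso e₁.symm ≪≫ tensorRightTensor x y)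
    ((tensorRightTensor y x).symm ≪≫ (tensoringRight C).mapIso e₂ ≪≫ rightUnitorNatIso C)

end CategoryTheory.MonoidalCategory

theorem aut_unit_mulEquiv_aut_of_weaklyInvertible
    {C : Type*} [Category C] [MonoidalCategory C] (x : C)
    (hx : ∃ y : C, Nonempty (x ⊗ y ≅ 𝟙_ C) ∧ Nonempty (y ⊗ x ≅ 𝟙_ C)) :
    ∃ e : Aut (𝟙_ C) ≃* Aut x,
      ∀ u : Aut (𝟙_ C),
        (e u).hom = (λ_ x).inv ≫ (u.hom ▷ x) ≫ (λ_ x).hom := by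
  obtain ⟨y, ⟨e₁⟩, ⟨e₂⟩⟩ := hx
  exact ⟨((tensorRightEquivalence e₁ e₂).fullyFaithfulFunctor.autMulEquivOfFullyFaithful
    (𝟙_ C)).trans (Aut.autMulEquivOfIso (λ_ x)), fun u => rfl⟩
end

section
/- Let G be a group, regarded as a discrete monoidal category (objects are the elements of G, only identity arrows, tensor product given by group multiplication). Let M be a monoidal category whose underlying category is a groupoid, and let F: G → M be a monoidal functor, with structure isomorphisms ε: 𝟙_M ≅ F(1) and μ_{g,g'}: F(g) ⊗ F(g') ≅ F(g g'). Let H be the set of pairs (g, φ) where g ∈ G and φ: 𝟙_M ≅ F(g) is an isomorphism in M. Then the operation (g, φ)·(g', ψ) := (g g', (φ ⊗ ψ) ≫ μ_{g,g'}) makes H into a group, whose identity element is (1, ε), such that the projection H → G, (g, φ) ↦ g, is a group homomorphism whose kernel is isomorphic as a group to Aut_M(𝟙_M). -/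
/-!
Call a morphism `𝟙_ ⟶ X` a point of `X`. Points of `F X` and `F Y` multiply to a point of
`F (X ⊗ Y)` by `λ⁻¹ ≫ (f ⊗ g) ≫ μ`; the associativity and unitality axioms of the lax monoidal
functor `F` say that this product is associative and unital up to `F` of the associator and
unitors, which are identities in the discrete category `G`. When `μ` is invertible every point
can be divided by an invertible one, which gives inverses. Over `1 ∈ G` the pairs are exactly
`(1, u⁻¹ ≫ ε)` with `u ∈ Aut 𝟙_`, and `u ↦ (1, u⁻¹ ≫ ε)` is multiplicative because an
endomorphism of `𝟙_` applied to the first factor of a product of points can be pulled out of it.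
-/

open CategoryTheory MonoidalCategory

namespace CategoryTheory.MonoidalCategory

variable {C : Type*} [Category C] [MonoidalCategory C] {X Y Z : C}

def pointTensor (f : 𝟙_ C ⟶ X) (g : 𝟙_ C ⟶ Y) : 𝟙_ C ⟶ X ⊗ Y :=
  (λ_ (𝟙_ C)).inv ≫ (f ⊗ₘ g)

lemma pointTensor_comp_whiskerRight {X' : C} (f : 𝟙_ C ⟶ X) (g : 𝟙_ C ⟶ Y) (k : X ⟶ X') :
    pointTensor f g ≫ k ▷ Y = pointTensor (f ≫ k) g := by
  rw [pointTensor, pointTensor, Category.assoc, tensorHom_comp_whiskerRight]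

lemma pointTensor_comp_whiskerLeft {Y' : C} (f : 𝟙_ C ⟶ X) (g : 𝟙_ C ⟶ Y) (k : Y ⟶ Y') :
    pointTensor f g ≫ X ◁ k = pointTensor f (g ≫ k) := by
  rw [pointTensor, pointTensor, Category.assoc, tensorHom_comp_whiskerLeft]

lemma pointTensor_assoc (f : 𝟙_ C ⟶ X) (g : 𝟙_ C ⟶ Y) (h : 𝟙_ C ⟶ Z) :
    pointTensor (pointTensor f g) h ≫ (α_ X Y Z).hom = pointTensor f (pointTensor g h) := by
  simp only [pointTensor, Category.assoc]
  rw [← whiskerRight_comp_tensorHom_assoc, ← whiskerLeft_comp_tensorHom, associator_naturality]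
  simp only [← Category.assoc]
  congr 1
  monoidal

lemma comp_pointTensor (u : 𝟙_ C ⟶ 𝟙_ C) (f : 𝟙_ C ⟶ X) (g : 𝟙_ C ⟶ Y) :
    pointTensor (u ≫ f) g = u ≫ pointTensor f g := by
  rw [pointTensor, pointTensor, ← whiskerRight_comp_tensorHom, unitors_inv_equal,
    rightUnitor_inv_naturality_assoc]

end CategoryTheory.MonoidalCategory

namespace CategoryTheory.Functor.LaxMonoidal

variable {C D : Type*} [Category C] [Category D] [MonoidalCategory C] [MonoidalCategory D]
  (F : C ⥤ D) [F.LaxMonoidal] {X Y Z : C}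

def pointMul (f : 𝟙_ D ⟶ F.obj X) (g : 𝟙_ D ⟶ F.obj Y) : 𝟙_ D ⟶ F.obj (X ⊗ Y) :=
  pointTensor f g ≫ μ F X Y

lemma pointMul_assoc (f : 𝟙_ D ⟶ F.obj X) (g : 𝟙_ D ⟶ F.obj Y) (h : 𝟙_ D ⟶ F.obj Z) :
    pointMul F (pointMul F f g) h ≫ F.map (α_ X Y Z).hom = pointMul F f (pointMul F g h) :=
  calc (pointTensor (pointTensor f g ≫ μ F X Y) h ≫ μ F (X ⊗ Y) Z) ≫ F.map (α_ X Y Z).hom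
      = pointTensor (pointTensor f g) h ≫
          μ F X Y ▷ F.obj Z ≫ μ F (X ⊗ Y) Z ≫ F.map (α_ X Y Z).hom := by
        rw [← pointTensor_comp_whiskerRight]
        simp only [Category.assoc]
    _ = (pointTensor (pointTensor f g) h ≫ (α_ _ _ _).hom) ≫
          F.obj X ◁ μ F Y Z ≫ μ F X (Y ⊗ Z) := by
        rw [associativity, Category.assoc]
    _ = pointTensor f (pointTensor g h ≫ μ F Y Z) ≫ μ F X (Y ⊗ Z) := by
        rw [pointTensor_assoc, ← pointTensor_comp_whiskerLeft, Category.assoc]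

lemma ε_pointMul (f : 𝟙_ D ⟶ F.obj X) : pointMul F (ε F) f ≫ F.map (λ_ X).hom = f := by
  simp only [pointMul, pointTensor, Category.assoc]
  rw [← tensorUnit_whiskerLeft_comp_leftUnitor_hom, leftUnitor_naturality, Iso.inv_hom_id_assoc]

lemma pointMul_ε (f : 𝟙_ D ⟶ F.obj X) : pointMul F f (ε F) ≫ F.map (ρ_ X).hom = f := by
  simp [pointMul, pointTensor, tensorHom_ε_comp_μ_assoc, unitors_inv_equal]

lemma comp_pointMul (u : 𝟙_ D ⟶ 𝟙_ D) (f : 𝟙_ D ⟶ F.obj X) (g : 𝟙_ D ⟶ F.obj Y) :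
    pointMul F (u ≫ f) g = u ≫ pointMul F f g := by
  rw [pointMul, comp_pointTensor, Category.assoc, pointMul]

end CategoryTheory.Functor.LaxMonoidal

namespace CategoryTheory.Functor.Monoidal

open LaxMonoidal

variable {C D : Type*} [Category C] [Category D] [MonoidalCategory C] [MonoidalCategory D]
  (F : C ⥤ D) [F.Monoidal] {X Y : C}

def pointDiv (g : 𝟙_ D ≅ F.obj (Y ⊗ X)) (φ : 𝟙_ D ≅ F.obj X) : 𝟙_ D ≅ F.obj Y :=
  g ≪≫ (μIso F Y X).symm ≪≫ whiskerLeftIso (F.obj Y) φ.symm ≪≫ ρ_ (F.obj Y)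

lemma pointMul_pointDiv_hom (g : 𝟙_ D ≅ F.obj (Y ⊗ X)) (φ : 𝟙_ D ≅ F.obj X) :
    pointMul F (pointDiv F g φ).hom φ.hom = g.hom := by
  simp [pointMul, pointTensor, pointDiv, unitors_inv_equal, rightUnitor_inv_comp_tensorHom_assoc]

end CategoryTheory.Functor.Monoidal

namespace CategoryTheory.Functor

variable {G M : Type*} [Category M] [MonoidalCategory M]

abbrev UnitIsoPairs (F : Discrete G ⥤ M) := Σ g : G, 𝟙_ M ≅ F.obj (Discrete.mk g)

namespace UnitIsoPairs

lemma ext {F : Discrete G ⥤ M} {a b : F.UnitIsoPairs} (f : Discrete.mk a.1 ⟶ Discrete.mk b.1)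
    (h : a.2.hom ≫ F.map f = b.2.hom) : a = b := by
  obtain ⟨g, φ⟩ := a
  obtain ⟨g', ψ⟩ := b
  obtain rfl : g = g' := Discrete.eq_of_hom f
  obtain rfl : f = 𝟙 _ := Subsingleton.elim _ _
  rw [F.map_id, Category.comp_id] at h
  exact congrArg _ (Iso.ext h)

open LaxMonoidal Monoidal

section Monoid

variable [Monoid G] (F : Discrete G ⥤ M) [F.Monoidal]

-- Scoped: `UnitIsoPairs` is reducible, so a global instance would also fire on the bare Σ-type.
scoped instance : Mul F.UnitIsoPairs where
  mul a b := ⟨a.1 * b.1, (λ_ (𝟙_ M)).symm ≪≫ (a.2 ⊗ᵢ b.2) ≪≫ μIso F _ _⟩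

scoped instance : One F.UnitIsoPairs where
  one := ⟨1, εIso F⟩

variable {F}

lemma mul_snd_hom (a b : F.UnitIsoPairs) :
    (a * b).2.hom = pointMul F a.2.hom b.2.hom :=
  (Category.assoc _ _ _).symm

lemma one_snd_hom : (1 : F.UnitIsoPairs).2.hom = ε F := rfl

scoped instance monoid : Monoid F.UnitIsoPairs where
  mul_assoc a b c := ext (α_ (Discrete.mk a.1) ⟨b.1⟩ ⟨c.1⟩).hom <| by
    simpa only [mul_snd_hom] using pointMul_assoc F a.2.hom b.2.hom c.2.hom
  one_mul a := ext (λ_ (Discrete.mk a.1)).hom <| by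
    simpa only [mul_snd_hom, one_snd_hom] using ε_pointMul F a.2.hom
  mul_one a := ext (ρ_ (Discrete.mk a.1)).hom <| by
    simpa only [mul_snd_hom, one_snd_hom] using pointMul_ε F a.2.hom

variable (F) in
def fst : F.UnitIsoPairs →* G where
  toFun := Sigma.fst
  map_one' := rfl
  map_mul' _ _ := rfl

/-- The inverse is needed because `Aut` multiplies in application order. -/
def ofAut : Aut (𝟙_ M) →* F.UnitIsoPairs where
  toFun u := ⟨1, u.symm ≪≫ εIso F⟩
  map_one' := ext (𝟙 _) (by
    rw [F.map_id, Category.comp_id, one_snd_hom]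
    exact Category.id_comp _)
  map_mul' u v := by
    refine (ext (λ_ (Discrete.mk (1 : G))).hom ?_).symm
    simp only [mul_snd_hom, Iso.trans_hom, Iso.symm_hom, εIso_hom, Aut.Aut_mul_def]
    rw [comp_pointMul, Category.assoc, ε_pointMul]
    exact (Category.assoc _ _ _).symm

end Monoid

section Group

variable [Group G] {F : Discrete G ⥤ M} [F.Monoidal]

scoped instance group : Group F.UnitIsoPairs where
  inv a := ⟨a.1⁻¹,
    pointDiv F (εIso F ≪≫ F.mapIso (Discrete.eqToIso' (inv_mul_cancel a.1).symm)) a.2⟩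
  inv_mul_cancel a := by
    refine ext (Discrete.eqToHom' (inv_mul_cancel a.1)) ?_
    rw [mul_snd_hom, pointMul_pointDiv_hom, one_snd_hom]
    simp

lemma ofAut_injective : Function.Injective (ofAut (F := F)) := by
  intro u v h
  have huv : u.symm ≪≫ εIso F = v.symm ≪≫ εIso F := eq_of_heq (Sigma.mk.inj h).2
  have hinv : u.inv = v.inv := (cancel_mono (ε F)).1 (congrArg Iso.hom huv)
  exact Aut.ext (Iso.inv_eq_inv u v |>.1 hinv)

lemma range_ofAut : (ofAut (F := F)).range = (fst F).ker := by
  ext a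
  constructor
  · rintro ⟨u, rfl⟩
    rfl
  · obtain ⟨g, φ⟩ := a
    rintro (rfl : g = 1)
    refine ⟨(φ ≪≫ (εIso F).symm).symm, ext (𝟙 _) ?_⟩
    show ((φ ≪≫ (εIso F).symm).symm.symm ≪≫ εIso F).hom ≫ F.map (𝟙 _) = φ.hom
    simp

noncomputable def kerFstEquivAut : (fst F).ker ≃* Aut (𝟙_ M) :=
  (MulEquiv.subgroupCongr range_ofAut).symm.trans (MonoidHom.ofInjective ofAut_injective).symm

end Group

end UnitIsoPairs

end CategoryTheory.Functor

theorem group_structure_on_pairs_of_monoidal_functor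
    {G : Type*} [Group G] {M : Type*} [Groupoid M] [MonoidalCategory M]
    (F : Discrete G ⥤ M) [F.Monoidal] :
    ∃ inst : Group (Σ g : G, 𝟙_ M ≅ F.obj (Discrete.mk g)),
      (∀ a b : Σ g : G, 𝟙_ M ≅ F.obj (Discrete.mk g),
          a * b = ⟨a.1 * b.1,
            (λ_ (𝟙_ M)).symm ≪≫ (a.2 ⊗ᵢ b.2) ≪≫
              Functor.Monoidal.μIso F (Discrete.mk a.1) (Discrete.mk b.1)⟩) ∧
      ((1 : Σ g : G, 𝟙_ M ≅ F.obj (Discrete.mk g)) = ⟨1, Functor.Monoidal.εIso F⟩) ∧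
      ∃ π : (Σ g : G, 𝟙_ M ≅ F.obj (Discrete.mk g)) →* G,
        (∀ a, π a = a.1) ∧ Nonempty (π.ker ≃* Aut (𝟙_ M)) :=
  ⟨Functor.UnitIsoPairs.group, fun _ _ => rfl, rfl, Functor.UnitIsoPairs.fst F, fun _ => rfl,
    ⟨Functor.UnitIsoPairs.kerFstEquivAut⟩⟩
end
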